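/- arXiv:1810.09791 — 6 statements merged into one kernel-verified Lean document; each statement's English description precedes it below -/
import Mathlib

section
/- Let g be the probability mass function of a sum of n-1 independent Bernoulli random variables with parameters in (0,1). Define alpha_k = g(k-1)/(g(k-1)+g(k)) for k = 0,...,n (with g(-1)=g(n)=0). Then 0 = alpha_0 < alpha_1 < ... < alpha_n = 1. -/
/-!
Adding an independent Bernoulli(`a`) variable turns a mass function `f` into
`h k = (1 - a) f k + a f (k - 1)`, and with `D k = f k ^ 2 - f (k - 1) f (k + 1)`,
`h k ^ 2 - h (k - 1) h (k + 1) = (1 - a)² D k + a² D (k - 1)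
  + a (1 - a) (f (k - 1) f k - f (k - 2) f (k + 1))`.
If `f` is positive exactly on `{0, …, n}` and strictly log-concave there, all three terms are
nonnegative and one of the first two is positive on `{0, …, n + 1}`, so by induction on the number
of parameters every Poisson-binomial mass function `g` is strictly log-concave on its support.
Clearing denominators, `α k < α (k + 1)` is exactly `g (k - 1) g (k + 1) < g k ^ 2`.
-/

/-- Mass function of a Poisson--binomial random variable with parameters `p`,
extended to `ℤ` (zero outside `{0,...,n}`). -/
noncomputable def pb {n : ℕ} (p : Fin n → ℝ) (k : ℤ) : ℝ :=
  if k < 0 then 0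
  else ∑ S ∈ Finset.powersetCard k.toNat (Finset.univ : Finset (Fin n)),
    (∏ i ∈ S, p i) * ∏ i ∈ Sᶜ, (1 - p i)

open Polynomial Finset

structure PosExactlyOnIcc (f : ℤ → ℝ) (n : ℕ) : Prop where
  pos : ∀ k : ℤ, 0 ≤ k → k ≤ n → 0 < f k
  eq_zero_of_neg : ∀ k : ℤ, k < 0 → f k = 0
  eq_zero_of_gt : ∀ k : ℤ, n < k → f k = 0

def StrictLogConcaveOnIcc (f : ℤ → ℝ) (n : ℕ) : Prop :=
  ∀ k : ℤ, 0 ≤ k → k ≤ n → f (k - 1) * f (k + 1) < f k ^ 2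

/-- The mass function of `X + B` when `f` is that of `X` and `B ~ Bernoulli(a)` is independent. -/
def bernoulliConv (a : ℝ) (f : ℤ → ℝ) (k : ℤ) : ℝ := (1 - a) * f k + a * f (k - 1)

namespace PosExactlyOnIcc

variable {f : ℤ → ℝ} {n : ℕ}

lemma nonneg (hf : PosExactlyOnIcc f n) (k : ℤ) : 0 ≤ f k := by
  rcases lt_or_ge k 0 with hk | hk
  · exact (hf.eq_zero_of_neg k hk).ge
  rcases le_or_gt k n with hk' | hk'
  · exact (hf.pos k hk hk').le
  · exact (hf.eq_zero_of_gt k hk').ge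

lemma mul_le_sq (hf : PosExactlyOnIcc f n) (hlc : StrictLogConcaveOnIcc f n) (k : ℤ) :
    f (k - 1) * f (k + 1) ≤ f k ^ 2 := by
  rcases lt_or_ge k 0 with hk | hk
  · rw [hf.eq_zero_of_neg (k - 1) (by omega), zero_mul]; positivity
  rcases le_or_gt k n with hk' | hk'
  · exact (hlc k hk hk').le
  · rw [hf.eq_zero_of_gt (k + 1) (by omega), mul_zero]; positivity

lemma outer_mul_le_inner_mul (hf : PosExactlyOnIcc f n) (hlc : StrictLogConcaveOnIcc f n)
    (k : ℤ) :
    f (k - 2) * f (k + 1) ≤ f (k - 1) * f k := by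
  have hRHS : 0 ≤ f (k - 1) * f k := mul_nonneg (hf.nonneg _) (hf.nonneg _)
  rcases le_or_gt k 0 with hk | hk
  · rwa [hf.eq_zero_of_neg (k - 2) (by omega), zero_mul]
  rcases le_or_gt k n with hk' | hk'
  · have hpos : 0 < f (k - 1) * f k :=
      mul_pos (hf.pos _ (by omega) (by omega)) (hf.pos _ (by omega) hk')
    have h₁ := hf.mul_le_sq hlc (k - 1)
    rw [show k - 1 - 1 = k - 2 by ring, show k - 1 + 1 = k by ring] at h₁
    refine le_of_mul_le_mul_right ?_ hpos
    calc f (k - 2) * f (k + 1) * (f (k - 1) * f k)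
        = (f (k - 2) * f k) * (f (k - 1) * f (k + 1)) := by ring
      _ ≤ f (k - 1) ^ 2 * f k ^ 2 :=
          mul_le_mul h₁ (hf.mul_le_sq hlc k) (mul_nonneg (hf.nonneg _) (hf.nonneg _)) (sq_nonneg _)
      _ = f (k - 1) * f k * (f (k - 1) * f k) := by ring
  · rwa [hf.eq_zero_of_gt (k + 1) (by omega), mul_zero]

lemma bernoulliConv (hf : PosExactlyOnIcc f n) {a : ℝ} (ha : a ∈ Set.Ioo (0 : ℝ) 1) :
    PosExactlyOnIcc (bernoulliConv a f) (n + 1) where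
  pos k hk hk' := by
    have h₁ : 0 < 1 - a := by linarith [ha.2]
    rcases le_or_gt k n with hkn | hkn
    · have := mul_pos h₁ (hf.pos k hk hkn)
      have := mul_nonneg ha.1.le (hf.nonneg (k - 1))
      rw [_root_.bernoulliConv]; linarith
    · have := mul_nonneg h₁.le (hf.nonneg k)
      have := mul_pos ha.1 (hf.pos (k - 1) (by omega) (by push_cast at hk'; omega))
      rw [_root_.bernoulliConv]; linarith
  eq_zero_of_neg k hk := by
    simp only [_root_.bernoulliConv, hf.eq_zero_of_neg k hk,
      hf.eq_zero_of_neg (k - 1) (by omega), mul_zero, add_zero]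
  eq_zero_of_gt k hk := by
    push_cast at hk
    simp only [_root_.bernoulliConv, hf.eq_zero_of_gt k (by omega),
      hf.eq_zero_of_gt (k - 1) (by omega), mul_zero, add_zero]

lemma strictLogConcaveOnIcc_bernoulliConv (hf : PosExactlyOnIcc f n)
    (hlc : StrictLogConcaveOnIcc f n) {a : ℝ} (ha : a ∈ Set.Ioo (0 : ℝ) 1) :
    StrictLogConcaveOnIcc (_root_.bernoulliConv a f) (n + 1) := by
  intro k hk hk'
  have hD : ∀ j, 0 ≤ f j ^ 2 - f (j - 1) * f (j + 1) := fun j ↦ sub_nonneg.2 (hf.mul_le_sq hlc j)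
  have hD' := hD (k - 1)
  rw [show k - 1 - 1 = k - 2 by ring, show k - 1 + 1 = k by ring] at hD'
  have hC : 0 ≤ a * (1 - a) * (f (k - 1) * f k - f (k - 2) * f (k + 1)) :=
    mul_nonneg (mul_nonneg ha.1.le (by linarith [ha.2]))
      (sub_nonneg.2 (hf.outer_mul_le_inner_mul hlc k))
  have key : _root_.bernoulliConv a f k ^ 2
        - _root_.bernoulliConv a f (k - 1) * _root_.bernoulliConv a f (k + 1)
      = (1 - a) ^ 2 * (f k ^ 2 - f (k - 1) * f (k + 1))
        + a ^ 2 * (f (k - 1) ^ 2 - f (k - 2) * f k)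
        + a * (1 - a) * (f (k - 1) * f k - f (k - 2) * f (k + 1)) := by
    simp only [_root_.bernoulliConv, show k - 1 - 1 = k - 2 by ring, show k + 1 - 1 = k by ring]
    ring
  rcases le_or_gt k n with hkn | hkn
  · have := mul_pos (pow_pos (by linarith [ha.2] : (0 : ℝ) < 1 - a) 2) (sub_pos.2 (hlc k hk hkn))
    linarith [mul_nonneg (sq_nonneg a) hD']
  · have hlc' := hlc (k - 1) (by omega) (by push_cast at hk'; omega)
    rw [show k - 1 - 1 = k - 2 by ring, show k - 1 + 1 = k by ring] at hlc'
    have := mul_pos (pow_pos ha.1 2) (sub_pos.2 hlc')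
    linarith [mul_nonneg (sq_nonneg (1 - a)) (hD k)]

end PosExactlyOnIcc

noncomputable def pbPoly {n : ℕ} (p : Fin n → ℝ) : ℝ[X] :=
  ∏ i, (C (p i) * X + C (1 - p i))

lemma pb_natCast_eq_coeff {n : ℕ} (p : Fin n → ℝ) (k : ℕ) : pb p k = (pbPoly p).coeff k := by
  have hterm (S : Finset (Fin n)) : (∏ i ∈ S, C (p i) * X) * ∏ i ∈ univ \ S, C (1 - p i)
      = C ((∏ i ∈ S, p i) * ∏ i ∈ Sᶜ, (1 - p i)) * X ^ #S := by
    rw [prod_mul_distrib, prod_const, ← compl_eq_univ_sdiff, map_mul, map_prod, map_prod]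
    ring
  rw [pb, if_neg (by omega), pbPoly, prod_add, sum_congr rfl fun S _ ↦ hterm S, finsetSum_coeff,
    powersetCard_eq_filter, sum_filter]
  refine sum_congr rfl fun S _ ↦ ?_
  rw [coeff_C_mul_X_pow, Int.toNat_natCast]
  by_cases h : k = #S <;> simp [h, Ne.symm]

lemma pb_succ {n : ℕ} (p : Fin (n + 1) → ℝ) :
    pb p = bernoulliConv (p (Fin.last n)) (pb (Fin.init p)) := by
  have hpoly : pbPoly p = pbPoly (Fin.init p) * (C (p (Fin.last n)) * X + C (1 - p (Fin.last n))) :=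
    Fin.prod_univ_castSucc _
  funext k
  rcases k with (_ | j) | j
  · rw [bernoulliConv, Int.ofNat_eq_natCast, pb_natCast_eq_coeff, pb_natCast_eq_coeff, hpoly,
      pb, if_pos (by norm_num), mul_add, ← mul_assoc, coeff_add, coeff_mul_X_zero, coeff_mul_C]
    ring
  · rw [bernoulliConv, Int.ofNat_eq_natCast, Nat.cast_succ, add_sub_cancel_right,
      pb_natCast_eq_coeff, ← Nat.cast_succ, pb_natCast_eq_coeff, pb_natCast_eq_coeff, hpoly,
      mul_add, ← mul_assoc, coeff_add, coeff_mul_X, coeff_mul_C, coeff_mul_C]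
    ring
  · simp only [bernoulliConv, pb, Int.negSucc_lt_zero, if_true]
    rw [if_pos (by omega)]
    ring

lemma pb_posExactlyOnIcc {n : ℕ} (p : Fin n → ℝ) (hp : ∀ i, p i ∈ Set.Ioo (0 : ℝ) 1) :
    PosExactlyOnIcc (pb p) n where
  pos k hk hkn := by
    rw [pb, if_neg (by omega)]
    refine sum_pos (fun S _ ↦ mul_pos (prod_pos fun i _ ↦ (hp i).1)
      (prod_pos fun i _ ↦ sub_pos.2 (hp i).2)) (powersetCard_nonempty.2 ?_)
    simp only [card_univ, Fintype.card_fin]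
    omega
  eq_zero_of_neg k hk := if_pos hk
  eq_zero_of_gt k hk := by
    rw [pb, if_neg (by omega), powersetCard_eq_empty.2 (by simp; omega), sum_empty]

lemma pb_strictLogConcaveOnIcc {n : ℕ} (p : Fin n → ℝ) (hp : ∀ i, p i ∈ Set.Ioo (0 : ℝ) 1) :
    StrictLogConcaveOnIcc (pb p) n := by
  induction n with
  | zero =>
    intro k hk hk0
    have hk : k = 0 := by omega
    subst hk
    have := (pb_posExactlyOnIcc p hp).pos 0 le_rfl le_rfl
    rw [(pb_posExactlyOnIcc p hp).eq_zero_of_neg (0 - 1) (by norm_num), zero_mul]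
    positivity
  | succ n ih =>
    rw [pb_succ]
    exact (pb_posExactlyOnIcc _ fun i ↦ hp _).strictLogConcaveOnIcc_bernoulliConv
      (ih _ fun i ↦ hp _) (hp _)

lemma div_add_lt_div_add_of_mul_lt_sq {a b c : ℝ} (ha : 0 ≤ a) (hb : 0 < b) (hc : 0 ≤ c)
    (h : a * c < b ^ 2) : a / (a + b) < b / (b + c) := by
  rw [div_lt_div_iff₀ (by linarith) (by linarith)]
  nlinarith

theorem stmt1 (m : ℕ) (p : Fin m → ℝ)
    (hp : ∀ i, p i ∈ Set.Ioo (0 : ℝ) 1)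
    (g : ℤ → ℝ) (hg : g = pb p)
    (α : ℤ → ℝ) (hα : ∀ k : ℤ, α k = g (k - 1) / (g (k - 1) + g k)) :
    α 0 = 0 ∧ α (m + 1) = 1 ∧
      ∀ k : ℤ, 0 ≤ k → k < (m : ℤ) + 1 → α k < α (k + 1) := by
  subst hg
  have hpb := pb_posExactlyOnIcc p hp
  refine ⟨?_, ?_, fun k hk hkm ↦ ?_⟩
  · rw [hα, hpb.eq_zero_of_neg (0 - 1) (by norm_num), zero_div]
  · rw [hα, add_sub_cancel_right, hpb.eq_zero_of_gt (m + 1) (by omega), add_zero,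
      div_self (hpb.pos m (by omega) le_rfl).ne']
  · rw [hα, hα, add_sub_cancel_right]
    exact div_add_lt_div_add_of_mul_lt_sq (hpb.nonneg _) (hpb.pos k hk (by omega)) (hpb.nonneg _)
      (pb_strictLogConcaveOnIcc p hp k hk (by omega))
end

section
/- Define psi(a) = a*log(a) - (1-a)*log(1-a) - (2 - 2*log 2)*(a - 1/2) for a in [0,1] (with 0*log 0 = 0). Then psi admits the power series representation psi(a) = - sum_{r >= 1} (2a-1)^{2r+1} / (2r(2r+1)), converging absolutely for all a in [0,1]. -/
/-!
Put `x = 2a - 1`. Splitting `1/((2r+2)(2r+3)) = 1/(2r+2) - 1/(2r+3)` writes the series as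
`-x · ∑ x^(2r+2)/(2r+2) + ∑ x^(2r+3)/(2r+3) = (x/2) log(1 - x²) + artanh x - x`, which is
`ψ` in the variable `x` for `|x| < 1`. The terms are bounded by `1/(r+1)²` on `[-1, 1]`, so the
series converges uniformly there, and the identity extends to the endpoints by continuity.
-/

/-- The function `ψ` of Definition 2.2 (note `Real.log 0 = 0`, so the
convention `0 log 0 = 0` is automatic). -/
noncomputable def psi (a : ℝ) : ℝ :=
  a * Real.log a - (1 - a) * Real.log (1 - a) - (2 - 2 * Real.log 2) * (a - 1 / 2)

open Real Set

noncomputable section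

def psiCentered (x : ℝ) : ℝ :=
  ((1 + x) * log (1 + x) - (1 - x) * log (1 - x)) / 2 - x

def psiSeriesTerm (x : ℝ) (r : ℕ) : ℝ :=
  x ^ (2 * (r + 1) + 1) / ((2 * (r + 1) : ℝ) * (2 * (r + 1) + 1))

end

lemma psi_eq_psiCentered (a : ℝ) : psi a = psiCentered (2 * a - 1) := by
  have mul_log_two_mul (b : ℝ) : b * log (2 * b) = b * log 2 + b * log b := by
    rcases eq_or_ne b 0 with rfl | hb
    · simp
    · rw [log_mul two_ne_zero hb, mul_add]
  have h₁ : 1 + (2 * a - 1) = 2 * a := by ring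
  have h₂ : 1 - (2 * a - 1) = 2 * (1 - a) := by ring
  simp only [psi, psiCentered, h₁, h₂, mul_assoc, mul_sub_right_distrib, mul_log_two_mul]
  ring

lemma continuous_psiCentered : Continuous psiCentered := by
  have h := continuous_mul_log
  unfold psiCentered
  fun_prop

lemma abs_psiSeriesTerm_le {x : ℝ} (hx : |x| ≤ 1) (r : ℕ) :
    |psiSeriesTerm x r| ≤ 1 / ((r : ℝ) + 1) ^ 2 := by
  have hden : ((r : ℝ) + 1) ^ 2 ≤ (2 * (r + 1) : ℝ) * (2 * (r + 1) + 1) := by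
    nlinarith [r.cast_nonneg (α := ℝ)]
  have hnum : |x| ^ (2 * (r + 1) + 1) ≤ 1 := pow_le_one₀ (abs_nonneg x) hx
  have hpos : (0 : ℝ) < (2 * (r + 1) : ℝ) * (2 * (r + 1) + 1) := by positivity
  rw [psiSeriesTerm, abs_div, abs_pow, abs_of_pos hpos]
  calc |x| ^ (2 * (r + 1) + 1) / ((2 * (r + 1) : ℝ) * (2 * (r + 1) + 1))
      ≤ 1 / ((2 * (r + 1) : ℝ) * (2 * (r + 1) + 1)) := by gcongr
    _ ≤ 1 / ((r : ℝ) + 1) ^ 2 := by gcongr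

lemma summable_one_div_succ_sq : Summable fun r : ℕ => 1 / ((r : ℝ) + 1) ^ 2 := by
  have h := summable_one_div_nat_pow.mpr one_lt_two
  exact_mod_cast (summable_nat_add_iff 1).mpr h

lemma summable_abs_psiSeriesTerm {x : ℝ} (hx : |x| ≤ 1) :
    Summable fun r => |psiSeriesTerm x r| :=
  summable_one_div_succ_sq.of_nonneg_of_le (fun _ => abs_nonneg _) (abs_psiSeriesTerm_le hx)

lemma hasSum_even_pow_div {x : ℝ} (hx : |x| < 1) :
    HasSum (fun r : ℕ => x ^ (2 * (r + 1)) / (2 * (r + 1) : ℝ)) (-log (1 - x ^ 2) / 2) := by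
  have hx2 : |x ^ 2| < 1 := by rwa [abs_pow, sq_lt_one_iff_abs_lt_one, abs_abs]
  refine ((hasSum_pow_div_log_of_abs_lt_one hx2).div_const 2).congr_fun fun r => ?_
  rw [pow_mul]
  field_simp

lemma hasSum_odd_pow_div {x : ℝ} (hx : |x| < 1) :
    HasSum (fun r : ℕ => x ^ (2 * (r + 1) + 1) / (2 * (r + 1) + 1 : ℝ))
      ((log (1 + x) - log (1 - x) - 2 * x) / 2) := by
  have h := ((hasSum_nat_add_iff' 1).mpr (hasSum_log_sub_log_of_abs_lt_one hx)).div_const 2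
  simp only [Finset.sum_range_one, Nat.cast_zero, mul_zero, zero_add, div_one, mul_one,
    pow_one] at h
  refine h.congr_fun fun r => ?_
  push_cast
  field_simp

lemma hasSum_psiSeriesTerm_of_abs_lt_one {x : ℝ} (hx : |x| < 1) :
    HasSum (fun r => -psiSeriesTerm x r) (psiCentered x) := by
  have h := ((hasSum_even_pow_div hx).mul_left (-x)).add (hasSum_odd_pow_div hx)
  have hlog : log (1 - x ^ 2) = log (1 + x) + log (1 - x) := by
    obtain ⟨h₁, h₂⟩ := abs_lt.mp hx
    rw [← log_mul (by linarith) (by linarith)]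
    ring_nf
  have hval : -x * (-log (1 - x ^ 2) / 2) + (log (1 + x) - log (1 - x) - 2 * x) / 2
      = psiCentered x := by
    rw [psiCentered, hlog]
    ring
  rw [hval] at h
  refine h.congr_fun fun r => ?_
  rw [psiSeriesTerm, pow_succ]
  field_simp
  ring

lemma hasSum_psiSeriesTerm {x : ℝ} (hx : x ∈ Icc (-1) 1) :
    HasSum (fun r => -psiSeriesTerm x r) (psiCentered x) := by
  have hcont : ContinuousOn (fun y => ∑' r, -psiSeriesTerm y r) (Icc (-1) 1) := by
    refine continuousOn_tsum (fun r => ?_) summable_one_div_succ_sq fun r y hy => ?_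
    · unfold psiSeriesTerm
      fun_prop
    · rw [norm_neg, norm_eq_abs]
      exact abs_psiSeriesTerm_le (abs_le.mpr hy) r
  have heq : EqOn (fun y => ∑' r, -psiSeriesTerm y r) psiCentered (Icc (-1) 1) :=
    EqOn.of_subset_closure (fun y hy => (hasSum_psiSeriesTerm_of_abs_lt_one
        (abs_lt.mpr hy)).tsum_eq) hcont continuous_psiCentered.continuousOn
      Ioo_subset_Icc_self (closure_Ioo (by norm_num)).ge
  rw [← heq hx]
  exact ((summable_abs_psiSeriesTerm (abs_le.mpr hx)).of_abs.neg).hasSum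

theorem stmt3 (a : ℝ) (ha : a ∈ Set.Icc (0 : ℝ) 1) :
    HasSum
      (fun r : ℕ =>
        -((2 * a - 1) ^ (2 * (r + 1) + 1) / ((2 * (r + 1) : ℝ) * (2 * (r + 1) + 1))))
      (psi a) ∧
    Summable
      (fun r : ℕ =>
        |(2 * a - 1) ^ (2 * (r + 1) + 1) / ((2 * (r + 1) : ℝ) * (2 * (r + 1) + 1))|) := by
  have hx : 2 * a - 1 ∈ Icc (-1 : ℝ) 1 := ⟨by linarith [ha.1], by linarith [ha.2]⟩
  rw [psi_eq_psiCentered]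
  exact ⟨hasSum_psiSeriesTerm hx, summable_abs_psiSeriesTerm (abs_le.mpr hx)⟩
end

section
/- Let g be the mass function of a sum of independent Bernoulli variables, write g^{(i)} for the mass function with the i-th variable omitted, and D^{(i)}(k) = (g^{(i)}(k))^2 - g^{(i)}(k+1) g^{(i)}(k-1). Then (D^{(i)}(k))^2 - D^{(i)}(k-1) D^{(i)}(k+1) >= 0, i.e. the sequence D^{(i)} is log-concave. -/
/-!
Write `g` as the coefficient sequence of `∏ᵢ ((1 - pᵢ) + pᵢ X)`. Multiplying a sequence by a
linear factor `α + β X` with `α, β ≥ 0` expands each 3 × 3 Toeplitz minor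
`det (a (cⱼ + i))` with decreasing columns `c` into a nonnegative combination of such minors of
`a`, so by induction from the unit sequence all these minors of `g` are nonnegative. The theorem
then follows from the Desnanot–Jacobi identity
`D(k)² - D(k-1) D(k+1) = g(k) · det (g (k - j + i))ᵢⱼ`.
-/

open Polynomial Finset

noncomputable def coeffZ (P : ℝ[X]) (k : ℤ) : ℝ :=
  if k < 0 then 0 else P.coeff k.toNat

lemma coeffZ_one : coeffZ 1 = fun k => if k = 0 then 1 else 0 := by
  funext k
  simp only [coeffZ, coeff_one]
  split_ifs <;> first | rfl | omega

lemma coeffZ_linear_mul (a b : ℝ) (P : ℝ[X]) (t : ℤ) :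
    coeffZ ((C b * X + C a) * P) t = a * coeffZ P t + b * coeffZ P (t - 1) := by
  unfold coeffZ
  rcases lt_trichotomy t 0 with h | rfl | h
  · simp [h, show t - 1 < 0 by omega]
  · simp [mul_coeff_zero]
  · rw [if_neg (by omega), if_neg (by omega), if_neg (by omega),
      show t.toNat = (t - 1).toNat + 1 by omega]
    simp only [add_mul, coeff_add, mul_assoc, coeff_C_mul, coeff_X_mul]
    ring

lemma coeff_prod_linear {ι : Type*} [DecidableEq ι] (a b : ι → ℝ) (s : Finset ι) (k : ℕ) :
    (∏ i ∈ s, (C (b i) * X + C (a i))).coeff k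
      = ∑ S ∈ s.powersetCard k, (∏ i ∈ S, b i) * ∏ i ∈ s \ S, a i := by
  simp only [prod_add, prod_mul_distrib, prod_const, ← map_prod, finsetSum_coeff,
    powersetCard_eq_filter, sum_filter]
  refine sum_congr rfl fun S _ => ?_
  rw [mul_right_comm, ← C_mul, coeff_C_mul_X_pow]
  simp [eq_comm]

lemma pb_eq_coeffZ {n : ℕ} (p : Fin n → ℝ) :
    pb p = coeffZ (∏ i, (C (p i) * X + C (1 - p i))) := by
  funext k
  unfold pb coeffZ
  split_ifs
  · rfl
  · simp only [coeff_prod_linear, compl_eq_univ_sdiff]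

lemma pb_nonneg {n : ℕ} {p : Fin n → ℝ} (hp : ∀ i, p i ∈ Set.Icc (0 : ℝ) 1) (k : ℤ) :
    0 ≤ pb p k := by
  unfold pb
  split_ifs
  · rfl
  · exact sum_nonneg fun S _ => mul_nonneg (prod_nonneg fun i _ => (hp i).1)
      (prod_nonneg fun i _ => sub_nonneg.2 (hp i).2)

def toeplitzMinor (a : ℤ → ℝ) (x y z : ℤ) : ℝ :=
  !![a x, a y, a z; a (x + 1), a (y + 1), a (z + 1); a (x + 2), a (y + 2), a (z + 2)].det

lemma toeplitzMinor_eq (a : ℤ → ℝ) (x y z : ℤ) :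
    toeplitzMinor a x y z =
      a x * a (y + 1) * a (z + 2) - a x * a (z + 1) * a (y + 2)
      - a y * a (x + 1) * a (z + 2) + a y * a (z + 1) * a (x + 2)
      + a z * a (x + 1) * a (y + 2) - a z * a (y + 1) * a (x + 2) := by
  simp only [toeplitzMinor, Matrix.det_fin_three, Matrix.of_apply, Matrix.cons_val',
    Matrix.cons_val_zero, Matrix.cons_val_fin_one, Matrix.cons_val_one, Matrix.cons_val,
    Fin.isValue]

lemma toeplitzMinor_self_left (a : ℤ → ℝ) (x z : ℤ) : toeplitzMinor a x x z = 0 := by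
  rw [toeplitzMinor_eq]; ring

lemma toeplitzMinor_self_right (a : ℤ → ℝ) (x z : ℤ) : toeplitzMinor a x z z = 0 := by
  rw [toeplitzMinor_eq]; ring

lemma toeplitzMinor_eq_of_shift_add {a b : ℤ → ℝ} {α β : ℝ}
    (hab : ∀ t, b t = α * a t + β * a (t - 1)) (x y z : ℤ) :
    toeplitzMinor b x y z =
      α ^ 3 * toeplitzMinor a x y z
      + α ^ 2 * β * (toeplitzMinor a (x - 1) y z + toeplitzMinor a x (y - 1) z
          + toeplitzMinor a x y (z - 1))
      + α * β ^ 2 * (toeplitzMinor a (x - 1) (y - 1) z + toeplitzMinor a (x - 1) y (z - 1)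
          + toeplitzMinor a x (y - 1) (z - 1))
      + β ^ 3 * toeplitzMinor a (x - 1) (y - 1) (z - 1) := by
  simp only [toeplitzMinor_eq, hab]
  ring_nf

/-- The Desnanot–Jacobi identity for the Toeplitz matrix `(a (k - j + i))ᵢⱼ`. -/
lemma sq_sub_mul_eq_mul_toeplitzMinor {a D : ℤ → ℝ}
    (hD : ∀ k, D k = a k ^ 2 - a (k + 1) * a (k - 1)) (k : ℤ) :
    D k ^ 2 - D (k - 1) * D (k + 1) = a k * toeplitzMinor a k (k - 1) (k - 2) := by
  simp only [hD, toeplitzMinor_eq]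
  ring_nf

def ToeplitzMinorsNonneg (a : ℤ → ℝ) : Prop :=
  ∀ x y z : ℤ, z < y → y < x → 0 ≤ toeplitzMinor a x y z

namespace ToeplitzMinorsNonneg

lemma of_le {a : ℤ → ℝ} (ha : ToeplitzMinorsNonneg a) {x y z : ℤ} (hzy : z ≤ y) (hyx : y ≤ x) :
    0 ≤ toeplitzMinor a x y z := by
  rcases hzy.eq_or_lt with rfl | hzy
  · rw [toeplitzMinor_self_right]
  rcases hyx.eq_or_lt with rfl | hyx
  · rw [toeplitzMinor_self_left]
  exact ha x y z hzy hyx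

lemma kronecker : ToeplitzMinorsNonneg fun k => if k = 0 then 1 else 0 := by
  intro x y z hzy hyx
  rw [toeplitzMinor_eq]
  split_ifs <;> first | omega | norm_num

lemma shift_add {a b : ℤ → ℝ} {α β : ℝ} (ha : ToeplitzMinorsNonneg a) (hα : 0 ≤ α) (hβ : 0 ≤ β)
    (hab : ∀ t, b t = α * a t + β * a (t - 1)) : ToeplitzMinorsNonneg b := by
  intro x y z hzy hyx
  rw [toeplitzMinor_eq_of_shift_add hab]
  refine add_nonneg (add_nonneg (add_nonneg ?_ ?_) ?_) ?_ <;> refine mul_nonneg (by positivity) ?_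
  · exact ha x y z hzy hyx
  · refine add_nonneg (add_nonneg ?_ ?_) ?_ <;> apply ha.of_le <;> omega
  · refine add_nonneg (add_nonneg ?_ ?_) ?_ <;> apply ha.of_le <;> omega
  · apply ha.of_le <;> omega

lemma prod_linear {ι : Type*} {a b : ι → ℝ} (ha : ∀ i, 0 ≤ a i) (hb : ∀ i, 0 ≤ b i)
    (s : Finset ι) : ToeplitzMinorsNonneg (coeffZ (∏ i ∈ s, (C (b i) * X + C (a i)))) := by
  classical
  induction s using Finset.induction_on with
  | empty => simpa only [prod_empty, coeffZ_one] using kronecker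
  | insert i s hi ih =>
    exact ih.shift_add (ha i) (hb i) fun t => by rw [prod_insert hi, coeffZ_linear_mul]

end ToeplitzMinorsNonneg

theorem stmt11 (m : ℕ) (p : Fin m → ℝ)
    (hp : ∀ i, p i ∈ Set.Icc (0 : ℝ) 1)
    (g : ℤ → ℝ) (hg : g = pb p)
    (D : ℤ → ℝ) (hD : ∀ k : ℤ, D k = (g k) ^ 2 - g (k + 1) * g (k - 1)) :
    ∀ k : ℤ, 0 ≤ k → k ≤ (m : ℤ) → 0 ≤ (D k) ^ 2 - D (k - 1) * D (k + 1) := by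
  intro k _ _
  have hminors : ToeplitzMinorsNonneg g := by
    rw [hg, pb_eq_coeffZ]
    exact .prod_linear (fun i => sub_nonneg.2 (hp i).2) (fun i => (hp i).1) _
  rw [sq_sub_mul_eq_mul_toeplitzMinor hD]
  exact mul_nonneg (hg ▸ pb_nonneg hp k) (hminors k (k - 1) (k - 2) (by omega) (by omega))
end

section
/- Let g be the mass function of a sum of n-1 independent Bernoulli variables (parameters in (0,1)), alpha_k = g(k-1)/(g(k-1)+g(k)) with alpha_0 = 0, alpha_n = 1, beta_k = alpha_k - 1/2, and A_p(k) = prod_{j=0}^{p-1} alpha_{k-j} (with A_0(k)=1 and A_p(k)=0 if p >= k+1). Then for any function v defined on {p,...,n-1} and any p >= 0: sum_{k=p}^{n-1} g(k) A_p(k) v(k) (beta_{k+1} + beta_{k-p}) = sum_{k=p+1}^{n-1} g(k) A_{p+1}(k) (v(k) - v(k-1)). -/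
/-! With `f k = g k * A (p + 1) k`, the relations `A (p + 1) k = A p k * α (k - p)`,
`A (p + 1) (k + 1) = α (k + 1) * A p k` and `(1 - α (k + 1)) * g k = α (k + 1) * g (k + 1)` give
`f k - f (k + 1) = g k * A p k * (β (k + 1) + β (k - p))`. Since `f` vanishes at `p` (as `α 0 = 0`)
and at `m + 1` (as `g (m + 1) = 0`), the identity is Abel summation with no boundary terms. -/

open Finset

theorem sum_Icc_by_parts_of_eq_zero {R : Type*} [CommRing R] (f v : ℤ → R) {a b : ℤ}
    (ha : f a = 0) (hb : f (b + 1) = 0) :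
    ∑ k ∈ Icc a b, (f k - f (k + 1)) * v k = ∑ k ∈ Icc (a + 1) b, f k * (v k - v (k - 1)) := by
  have drop_bottom : ∑ k ∈ Icc a b, f k * v k = ∑ k ∈ Icc (a + 1) b, f k * v k := by
    refine (sum_subset (Icc_subset_Icc_left (by omega)) fun k hk hk' => ?_).symm
    obtain rfl : k = a := by simp only [mem_Icc] at hk hk'; omega
    rw [ha, zero_mul]
  have shift : ∑ k ∈ Icc a b, f (k + 1) * v k = ∑ k ∈ Icc (a + 1) b, f k * v (k - 1) := by
    calc ∑ k ∈ Icc a b, f (k + 1) * v k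
        = ∑ k ∈ Icc (a + 1) (b + 1), f k * v (k - 1) := by
          rw [← map_add_right_Icc, sum_map]; simp
      _ = _ := by
          refine (sum_subset (Icc_subset_Icc_right (by omega)) fun k hk hk' => ?_).symm
          obtain rfl : k = b + 1 := by simp only [mem_Icc] at hk hk'; omega
          rw [hb, zero_mul]
  simp only [sub_mul, mul_sub, sum_sub_distrib, drop_bottom, shift]

theorem prod_range_succ_sub_succ {M : Type*} [CommMonoid M] (α : ℤ → M) (p : ℕ) (k : ℤ) :
    ∏ j ∈ range (p + 1), α (k + 1 - j) = α (k + 1) * ∏ j ∈ range p, α (k - j) := by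
  rw [prod_range_succ', mul_comm]
  push_cast
  simp only [sub_zero, add_sub_add_right_eq_sub]

theorem pb_pos {n : ℕ} (p : Fin n → ℝ) (hp : ∀ i, p i ∈ Set.Ioo (0 : ℝ) 1)
    (k : ℤ) (hk0 : 0 ≤ k) (hkn : k ≤ (n : ℤ)) : 0 < pb p k := by
  rw [pb, if_neg (not_lt.mpr hk0)]
  refine sum_pos (fun S _ => mul_pos ?_ ?_) (powersetCard_nonempty.mpr ?_)
  · exact prod_pos fun i _ => (hp i).1
  · exact prod_pos fun i _ => sub_pos.mpr (hp i).2
  · simpa using Int.toNat_le.mpr hkn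

theorem pb_natCast_add_one {n : ℕ} (p : Fin n → ℝ) : pb p ((n : ℤ) + 1) = 0 := by
  rw [pb, if_neg (by omega), show ((n : ℤ) + 1).toNat = n + 1 by omega,
    powersetCard_eq_empty.mpr (by simp), sum_empty]

theorem mul_one_sub_alpha_succ_eq {g α : ℤ → ℝ} {m : ℤ} (hg : ∀ j, 0 ≤ j → j ≤ m → 0 < g j)
    (hgm : g (m + 1) = 0) (hα : ∀ j, 1 ≤ j → j ≤ m → α j = g (j - 1) / (g (j - 1) + g j))
    (hαm : α (m + 1) = 1) {k : ℤ} (hk0 : 0 ≤ k) (hkm : k ≤ m) :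
    g k * (1 - α (k + 1)) = α (k + 1) * g (k + 1) := by
  rcases hkm.lt_or_eq with hkm | rfl
  · have hsum : g k + g (k + 1) ≠ 0 := (add_pos (hg k hk0 hkm.le) (hg _ (by omega) hkm)).ne'
    rw [hα (k + 1) (by omega) hkm, add_sub_cancel_right]
    field_simp
    ring
  · rw [hαm, hgm, sub_self, mul_zero, mul_zero]

theorem stmt15 (m : ℕ) (q : Fin m → ℝ)
    (hq : ∀ i, q i ∈ Set.Ioo (0 : ℝ) 1)
    (g : ℤ → ℝ) (hg : g = pb q)
    (α : ℤ → ℝ)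
    (hα : ∀ k : ℤ, 1 ≤ k → k ≤ (m : ℤ) → α k = g (k - 1) / (g (k - 1) + g k))
    (hα0 : ∀ k : ℤ, k ≤ 0 → α k = 0) (hαn : ∀ k : ℤ, (m : ℤ) + 1 ≤ k → α k = 1)
    (β : ℤ → ℝ) (hβ : ∀ k, β k = α k - 1 / 2)
    (A : ℕ → ℤ → ℝ) (hA : ∀ p k, A p k = ∏ j ∈ Finset.range p, α (k - j)) :
    ∀ (p : ℕ) (v : ℤ → ℝ),
      ∑ k ∈ Finset.Icc (p : ℤ) (m : ℤ),
          g k * A p k * v k * (β (k + 1) + β (k - p)) =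
        ∑ k ∈ Finset.Icc ((p : ℤ) + 1) (m : ℤ),
          g k * A (p + 1) k * (v k - v (k - 1)) := by
  intro p v
  subst hg
  have hg_top := pb_natCast_add_one q
  have balance {k : ℤ} := mul_one_sub_alpha_succ_eq (pb_pos q hq) hg_top hα (hαn _ le_rfl) (k := k)
  have hA_succ (k : ℤ) : A (p + 1) k = A p k * α (k - p) := by rw [hA, hA, prod_range_succ]
  have hA_succ_succ (k : ℤ) : A (p + 1) (k + 1) = α (k + 1) * A p k := by
    rw [hA, hA, prod_range_succ_sub_succ]
  have hA_bottom : A (p + 1) p = 0 := by rw [hA_succ, sub_self, hα0 0 le_rfl, mul_zero]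
  rw [← sum_Icc_by_parts_of_eq_zero (fun k => pb q k * A (p + 1) k) v
    (by rw [hA_bottom, mul_zero]) (by rw [hg_top, zero_mul])]
  refine sum_congr rfl fun k hk => ?_
  obtain ⟨hpk, hkm⟩ := mem_Icc.mp hk
  rw [hA_succ, hA_succ_succ, hβ, hβ]
  linear_combination -(A p k * v k) * balance (by omega) hkm
end

section
/- Let f be a positive probability mass function on {0,...,n}, g defined by g(k) = 2(1 - alpha_k) f(k) = 2 alpha_{k+1} f(k+1) for mixing coefficients alpha with alpha_0 = 0, alpha_n = 1, and beta_k = alpha_k - 1/2. Then for every r >= 1: 4 sum_{k=0}^n f(k) beta_k^{2r+1} = sum_{k=0}^{n-1} g(k) (beta_{k+1}^{2r} - beta_k^{2r}). -/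
open Finset

theorem sum_range_mul_sub_eq_sum_range_sub_mul {R : Type*} [CommRing R] (g c : ℕ → R) (n : ℕ) :
    ∑ k ∈ range n, g k * (c (k + 1) - c k) =
      ∑ k ∈ range n, (g k - g (k + 1)) * c (k + 1) - g 0 * c 0 + g n * c n := by
  induction n with
  | zero => simp
  | succ n ih => rw [sum_range_succ, ih, sum_range_succ]; ring

theorem stmt16_general (n : ℕ) (f α : ℕ → ℝ)
    (hα0 : α 0 = 0) (hαn : α n = 1)
    (g : ℕ → ℝ) (hg : ∀ k, g k = 2 * (1 - α k) * f k)
    (hg' : ∀ k, k + 1 ≤ n → g k = 2 * α (k + 1) * f (k + 1))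
    (β : ℕ → ℝ) (hβ : ∀ k, β k = α k - 1 / 2) :
    ∀ r : ℕ, 1 ≤ r →
      4 * ∑ k ∈ Finset.range (n + 1), f k * β k ^ (2 * r + 1) =
        ∑ k ∈ Finset.range n, g k * (β (k + 1) ^ (2 * r) - β k ^ (2 * r)) := by
  intro r _
  have hgn : g n = 0 := by rw [hg, hαn]; ring
  -- `4 f(k) β_k = g(k-1) - g(k)`, with `g(-1) = 0` at `k = 0`
  have h_zero : 4 * (f 0 * β 0 ^ (2 * r + 1)) = -g 0 * β 0 ^ (2 * r) := by
    rw [hg, hβ, hα0, pow_succ]; ring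
  have h_succ : ∀ k ∈ range n, 4 * (f (k + 1) * β (k + 1) ^ (2 * r + 1)) =
      (g k - g (k + 1)) * β (k + 1) ^ (2 * r) := by
    intro k hk
    rw [hg' k (mem_range.mp hk), hg, hβ, pow_succ]; ring
  rw [sum_range_mul_sub_eq_sum_range_sub_mul g (β · ^ (2 * r)), hgn,
    sum_range_succ', mul_add, mul_sum, sum_congr rfl h_succ, h_zero]
  ring

theorem stmt16 (n : ℕ) (hn : 1 ≤ n) (f α : ℕ → ℝ)
    (hfpos : ∀ k ≤ n, 0 < f k)
    (hfsum : ∑ k ∈ Finset.range (n + 1), f k = 1)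
    (hα0 : α 0 = 0) (hαn : α n = 1)
    (g : ℕ → ℝ) (hg : ∀ k, g k = 2 * (1 - α k) * f k)
    (hg' : ∀ k, k + 1 ≤ n → g k = 2 * α (k + 1) * f (k + 1))
    (β : ℕ → ℝ) (hβ : ∀ k, β k = α k - 1 / 2) :
    ∀ r : ℕ, 1 ≤ r →
      4 * ∑ k ∈ Finset.range (n + 1), f k * β k ^ (2 * r + 1) =
        ∑ k ∈ Finset.range n, g k * (β (k + 1) ^ (2 * r) - β k ^ (2 * r)) :=
  stmt16_general n f α hα0 hαn g hg hg' β hβ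
end

section
/- Let p_n be in (0, 1/2], let g be the mass function of a sum of n-1 independent Bernoulli random variables (any parameters in [0,1]), and f(k) = (1 - p_n) g(k) + p_n g(k-1) the mass function after convolving with Bernoulli(p_n). Then -2 sum_{k=0}^n (g(k-1) - g(k)) f(k) = (1 - 2 p_n) sum_{k=0}^n (g(k-1) - g(k))^2 >= 0. In particular the derivative of the Tsallis 2-entropy of the Poisson-binomial distribution with respect to p_n is nonnegative when p_n <= 1/2. -/
open Finset

theorem pb_of_neg {n : ℕ} (p : Fin n → ℝ) {k : ℤ} (hk : k < 0) : pb p k = 0 :=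
  if_pos hk

theorem pb_of_lt {n : ℕ} (p : Fin n → ℝ) {k : ℤ} (hk : (n : ℤ) < k) : pb p k = 0 := by
  have hempty : powersetCard k.toNat (univ : Finset (Fin n)) = ∅ :=
    powersetCard_eq_empty.mpr (by simp; omega)
  rw [pb, if_neg (by omega), hempty, sum_empty]

theorem Int.sum_Icc_sub_shift {M : Type*} [AddCommGroup M] (f : ℤ → M) {a b : ℤ}
    (hab : a - 1 ≤ b) : ∑ k ∈ Icc a b, (f (k - 1) - f k) = f (a - 1) - f b := by
  induction b, hab using Int.leInduction with
  | base => simp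
  | succ b hb ih =>
    rw [← insert_Icc_right_eq_Icc_add_one (by omega), sum_insert (by simp), ih,
      add_sub_cancel_right]
    abel

theorem neg_two_mul_sum_Icc_sub_shift_mul_self {R : Type*} [CommRing R] (g : ℤ → R) {a b : ℤ}
    (hab : a - 1 ≤ b) (ha : g (a - 1) = 0) (hb : g b = 0) :
    -2 * ∑ k ∈ Icc a b, (g (k - 1) - g k) * g k = ∑ k ∈ Icc a b, (g (k - 1) - g k) ^ 2 := by
  have htele : ∑ k ∈ Icc a b, (g (k - 1) ^ 2 - g k ^ 2) = 0 := by
    rw [Int.sum_Icc_sub_shift (fun k => g k ^ 2) hab, ha, hb, sub_self]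
  rw [mul_sum, eq_comm, ← sub_eq_zero, ← sum_sub_distrib, ← htele]
  exact sum_congr rfl fun k _ => by ring

theorem neg_two_mul_sum_Icc_sub_shift_mul_of_conv {R : Type*} [CommRing R] (g f : ℤ → R) (p : R)
    {a b : ℤ} (hab : a - 1 ≤ b) (ha : g (a - 1) = 0) (hb : g b = 0)
    (hf : ∀ k, f k = (1 - p) * g k + p * g (k - 1)) :
    -2 * ∑ k ∈ Icc a b, (g (k - 1) - g k) * f k =
      (1 - 2 * p) * ∑ k ∈ Icc a b, (g (k - 1) - g k) ^ 2 := by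
  have hsplit : ∑ k ∈ Icc a b, (g (k - 1) - g k) * f k =
      ∑ k ∈ Icc a b, (g (k - 1) - g k) * g k + p * ∑ k ∈ Icc a b, (g (k - 1) - g k) ^ 2 := by
    rw [mul_sum, ← sum_add_distrib]
    exact sum_congr rfl fun k _ => by rw [hf]; ring
  rw [hsplit, mul_add, neg_two_mul_sum_Icc_sub_shift_mul_self g hab ha hb]
  ring

theorem stmt18_general (m : ℕ) (q : Fin m → ℝ)
    (pn : ℝ) (hpn : pn ∈ Set.Ioc (0 : ℝ) (1 / 2))
    (g : ℤ → ℝ) (hg : g = pb q)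
    (f : ℤ → ℝ) (hf : ∀ k : ℤ, f k = (1 - pn) * g k + pn * g (k - 1)) :
    -2 * ∑ k ∈ Finset.Icc (0 : ℤ) (m + 1), (g (k - 1) - g k) * f k =
        (1 - 2 * pn) * ∑ k ∈ Finset.Icc (0 : ℤ) (m + 1), (g (k - 1) - g k) ^ 2 ∧
      0 ≤ (1 - 2 * pn) * ∑ k ∈ Finset.Icc (0 : ℤ) (m + 1), (g (k - 1) - g k) ^ 2 := by
  subst hg
  refine ⟨neg_two_mul_sum_Icc_sub_shift_mul_of_conv _ f pn (by omega)
    (pb_of_neg q (by omega)) (pb_of_lt q (by omega)) hf, ?_⟩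
  have hpn_half : 0 ≤ 1 - 2 * pn := by linarith [hpn.2]
  exact mul_nonneg hpn_half (sum_nonneg fun k _ => sq_nonneg _)

theorem stmt18 (m : ℕ) (q : Fin m → ℝ)
    (hq : ∀ i, q i ∈ Set.Icc (0 : ℝ) 1)
    (pn : ℝ) (hpn : pn ∈ Set.Ioc (0 : ℝ) (1 / 2))
    (g : ℤ → ℝ) (hg : g = pb q)
    (f : ℤ → ℝ) (hf : ∀ k : ℤ, f k = (1 - pn) * g k + pn * g (k - 1)) :
    -2 * ∑ k ∈ Finset.Icc (0 : ℤ) (m + 1), (g (k - 1) - g k) * f k =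
        (1 - 2 * pn) * ∑ k ∈ Finset.Icc (0 : ℤ) (m + 1), (g (k - 1) - g k) ^ 2 ∧
      0 ≤ (1 - 2 * pn) * ∑ k ∈ Finset.Icc (0 : ℤ) (m + 1), (g (k - 1) - g k) ^ 2 :=
  stmt18_general m q pn hpn g hg f hf
end
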